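/- arXiv:2206.03599 — 4 statements merged into one kernel-verified Lean document; each statement's English description precedes it below -/
import Mathlib

section
/- Let F_2^6 carry a nondegenerate alternating form. If a 4-dimensional linear subspace W of F_2^6 contains a totally isotropic 3-dimensional subspace, then W contains exactly three totally isotropic 3-dimensional subspaces, and these three subspaces pairwise intersect in a common totally isotropic 2-dimensional subspace. -/
/-- A submodule is totally isotropic for a bilinear form `B` if `B` vanishes identically
on it. -/
def IsTotallyIsotropic {F V : Type*} [Field F] [AddCommGroup V] [Module F V]
    (B : V →ₗ[F] V →ₗ[F] F) (S : Submodule F V) : Prop :=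
  ∀ x ∈ S, ∀ y ∈ S, B x y = 0

/-!
The orthogonal `L = W⊥` of the 4-space `W` is a plane. A totally isotropic 3-space `T` in the
6-space is Lagrangian, `T = T⊥`, so `T ≤ W` forces `L ≤ T⊥ = T`; in particular `L ≤ W`.
Conversely every 3-space between `L` and `W` is `L + ⟨x⟩` with `x ∈ W ⊆ L⊥`, hence totally
isotropic because the form is alternating. So the totally isotropic 3-spaces in `W` correspond to
the lines of the 2-dimensional quotient `W / L` over `F₂`, of which there are `2 + 1 = 3`.
-/

open Module Submodule LinearMap LinearMap.BilinForm
open scoped LinearAlgebra.Projectivization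

section Counting

variable {K V : Type*} [Field K] [AddCommGroup V] [Module K V]

theorem Submodule.finrank_comap_mkQ [FiniteDimensional K V] (L : Submodule K V)
    (S : Submodule K (V ⧸ L)) :
    finrank K (S.comap L.mkQ) = finrank K L + finrank K S := by
  have h := finrank_range_add_finrank_ker (L.mkQ ∘ₗ (S.comap L.mkQ).subtype)
  rw [range_comp, range_subtype, map_comap_eq_of_surjective L.mkQ_surjective, ker_comp, ker_mkQ,
    (comapSubtypeEquivOfLe (le_comap_mkQ L S)).finrank_eq] at h
  omega

noncomputable def Submodule.finrankEqEquiv (U : Submodule K V) (d : ℕ) :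
    {S : Submodule K U // finrank K S = d} ≃ {S : Submodule K V // S ≤ U ∧ finrank K S = d} :=
  ((MapSubtype.orderIso U).toEquiv.subtypeEquiv (p := fun S : Submodule K U => finrank K S = d)
    (q := fun S : {S : Submodule K V // S ≤ U} => finrank K S.1 = d) fun S => by
      change _ ↔ finrank K (S.map U.subtype) = d
      rw [finrank_map_subtype_eq]).trans
    (Equiv.subtypeSubtypeEquivSubtypeInter (fun S => S ≤ U) fun S => finrank K S = d)

noncomputable def Submodule.linesInQuotientEquiv [FiniteDimensional K V]
    {L W : Submodule K V} (hLW : L ≤ W) :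
    {S : Submodule K (V ⧸ L) // S ≤ W.map L.mkQ ∧ finrank K S = 1} ≃
      {T : Submodule K V // L ≤ T ∧ T ≤ W ∧ finrank K T = finrank K L + 1} :=
  ((comapMkQRelIso L).toEquiv.subtypeEquiv
    (q := fun T : Set.Ici L => T.1 ≤ W ∧ finrank K T.1 = finrank K L + 1) fun S => by
      change _ ↔ S.comap L.mkQ ≤ W ∧ finrank K (S.comap L.mkQ) = finrank K L + 1
      rw [finrank_comap_mkQ, Nat.add_left_cancel_iff, ← comap_le_comap_iff (range_mkQ L) (p := S),
        comap_map_mkQ, sup_eq_right.mpr hLW]).trans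
    (Equiv.subtypeSubtypeEquivSubtypeInter (fun T => L ≤ T)
      fun T => T ≤ W ∧ finrank K T = finrank K L + 1)

theorem Submodule.card_between_of_finrank_eq_add_two [Finite K] [FiniteDimensional K V]
    {L W : Submodule K V} (hLW : L ≤ W) (hW : finrank K W = finrank K L + 2) :
    Nat.card {T : Submodule K V // L ≤ T ∧ T ≤ W ∧ finrank K T = finrank K L + 1} =
      Nat.card K + 1 := by
  have hW' : finrank K (W.map L.mkQ) = 2 := by
    have := finrank_comap_mkQ L (W.map L.mkQ)
    rw [comap_map_mkQ, sup_eq_right.mpr hLW] at this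
    omega
  calc _ = Nat.card (ℙ K (W.map L.mkQ)) :=
        Nat.card_congr ((linesInQuotientEquiv hLW).symm.trans
          ((finrankEqEquiv _ 1).symm.trans (Projectivization.equivSubmodule K _).symm))
    _ = Nat.card K + 1 := Projectivization.card_of_finrank_two K _ hW'

end Counting

section Isotropy

variable {K V : Type*} [Field K] [AddCommGroup V] [Module K V] {B : LinearMap.BilinForm K V}
  {L T W : Submodule K V}

theorem IsTotallyIsotropic.mono (hT : IsTotallyIsotropic B T) (hLT : L ≤ T) :
    IsTotallyIsotropic B L :=
  fun x hx y hy => hT x (hLT hx) y (hLT hy)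

theorem IsTotallyIsotropic.le_orthogonal (hT : IsTotallyIsotropic B T) : T ≤ B.orthogonal T :=
  fun x hx y hy => hT y hy x hx

theorem IsTotallyIsotropic.orthogonal_le [FiniteDimensional K V] (hB : B.Nondegenerate)
    (hT : IsTotallyIsotropic B T) (hrank : 2 * finrank K T = finrank K V) (hTW : T ≤ W) :
    B.orthogonal W ≤ T := by
  have hTT : B.orthogonal T = T :=
    (eq_of_le_of_finrank_le hT.le_orthogonal (by rw [finrank_orthogonal hB]; omega)).symm
  exact hTT ▸ LinearMap.BilinForm.orthogonal_le hTW

theorem isTotallyIsotropic_sup_span_singleton (hB : B.IsAlt) (hL : IsTotallyIsotropic B L)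
    {x : V} (hx : x ∈ B.orthogonal L) : IsTotallyIsotropic B (L ⊔ span K {x}) := by
  rintro _ hy _ hz
  obtain ⟨l, hl, _, hs, rfl⟩ := mem_sup.mp hy
  obtain ⟨a, rfl⟩ := mem_span_singleton.mp hs
  obtain ⟨l', hl', _, hs', rfl⟩ := mem_sup.mp hz
  obtain ⟨b, rfl⟩ := mem_span_singleton.mp hs'
  have hxl' : B x l' = 0 := hB.isRefl _ _ (hx l' hl')
  simp [hL l hl l' hl', hx l hl, hxl', hB x]

theorem Submodule.eq_sup_span_singleton_of_finrank_eq_succ [FiniteDimensional K V]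
    (hLT : L ≤ T) (hT : finrank K T = finrank K L + 1) {x : V} (hxT : x ∈ T) (hxL : x ∉ L) :
    T = L ⊔ span K {x} := by
  have hlt : L < L ⊔ span K {x} :=
    lt_of_le_of_ne le_sup_left fun h => hxL (h ▸ mem_sup_right (mem_span_singleton_self x))
  refine (eq_of_le_of_finrank_le (sup_le hLT ((span_singleton_le_iff_mem x T).mpr hxT)) ?_).symm
  have := finrank_lt_finrank_of_lt hlt
  omega

theorem isTotallyIsotropic_of_le_orthogonal [FiniteDimensional K V] (hB : B.IsAlt)
    (hLW : L ≤ B.orthogonal W) (hLT : L ≤ T) (hTW : T ≤ W)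
    (hT : finrank K T = finrank K L + 1) : IsTotallyIsotropic B T := by
  obtain ⟨x, hxT, hxL⟩ := SetLike.exists_of_lt (lt_of_le_of_ne hLT (by rintro rfl; omega))
  rw [eq_sup_span_singleton_of_finrank_eq_succ hLT hT hxT hxL]
  exact isTotallyIsotropic_sup_span_singleton hB (fun y hy z hz => hLW hz y (hTW (hLT hy)))
    fun l hl => hB.isRefl _ _ (hLW hl x (hTW hxT))

theorem isTotallyIsotropic_iff_orthogonal_le [FiniteDimensional K V] (hB : B.IsAlt)
    (hnd : B.Nondegenerate) {n : ℕ} (hV : finrank K V = 2 * n) (hW : finrank K W = n + 1)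
    (hTW : T ≤ W) (hT : finrank K T = n) :
    IsTotallyIsotropic B T ↔ B.orthogonal W ≤ T := by
  refine ⟨fun h => h.orthogonal_le hnd (by omega) hTW, fun h => ?_⟩
  have := W.finrank_le
  exact isTotallyIsotropic_of_le_orthogonal hB le_rfl h hTW (by rw [finrank_orthogonal hnd]; omega)

end Isotropy

/-- If a 4-dimensional linear subspace `W` of `F_2^6` (with a nondegenerate alternating
form) contains a totally isotropic 3-dimensional subspace, then it contains exactly three
such subspaces, and these pass through a common totally isotropic 2-dimensional subspace. -/
theorem three_ti_planes_through_common_line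
    (B : (Fin 6 → ZMod 2) →ₗ[ZMod 2] (Fin 6 → ZMod 2) →ₗ[ZMod 2] ZMod 2)
    (halt : ∀ x, B x x = 0)
    (hnd : ∀ x, (∀ y, B x y = 0) → x = 0)
    (W : Submodule (ZMod 2) (Fin 6 → ZMod 2))
    (hW : Module.finrank (ZMod 2) W = 4)
    (hex : ∃ T : Submodule (ZMod 2) (Fin 6 → ZMod 2),
      T ≤ W ∧ IsTotallyIsotropic B T ∧ Module.finrank (ZMod 2) T = 3) :
    Nat.card {T : Submodule (ZMod 2) (Fin 6 → ZMod 2) //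
        T ≤ W ∧ IsTotallyIsotropic B T ∧ Module.finrank (ZMod 2) T = 3} = 3 ∧
    ∃ L : Submodule (ZMod 2) (Fin 6 → ZMod 2),
      L ≤ W ∧ IsTotallyIsotropic B L ∧ Module.finrank (ZMod 2) L = 2 ∧
      ∀ T : Submodule (ZMod 2) (Fin 6 → ZMod 2),
        T ≤ W → IsTotallyIsotropic B T → Module.finrank (ZMod 2) T = 3 → L ≤ T := by
  obtain ⟨T₀, hT₀W, hT₀, hT₀rank⟩ := hex
  have hB : B.Nondegenerate :=
    (LinearMap.IsAlt.isRefl halt).nondegenerate_iff_separatingLeft.mpr hnd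
  have hV : finrank (ZMod 2) (Fin 6 → ZMod 2) = 2 * 3 := by simp
  have hL : finrank (ZMod 2) (orthogonal B W) = 2 := by rw [finrank_orthogonal hB, hV, hW]
  have hlag (T) (hTW : T ≤ W) (hT : finrank (ZMod 2) T = 3) :=
    isTotallyIsotropic_iff_orthogonal_le halt hB hV hW hTW hT
  have hLT₀ := (hlag T₀ hT₀W hT₀rank).mp hT₀
  refine ⟨?_, orthogonal B W, hLT₀.trans hT₀W, hT₀.mono hLT₀, hL,
    fun T hTW hT hTrank => (hlag T hTW hTrank).mp hT⟩
  have hcard :=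
    card_between_of_finrank_eq_add_two (hLT₀.trans hT₀W) (by omega : finrank _ W = _)
  rw [hL] at hcard
  calc _ = Nat.card {T // orthogonal B W ≤ T ∧ T ≤ W ∧ finrank (ZMod 2) T = 2 + 1} :=
        Nat.card_congr <| Equiv.subtypeEquivRight fun T =>
          ⟨fun ⟨hTW, hT, hTrank⟩ => ⟨(hlag T hTW hTrank).mp hT, hTW, hTrank⟩,
            fun ⟨hLT, hTW, hTrank⟩ => ⟨hTW, (hlag T hTW hTrank).mpr hLT, hTrank⟩⟩
    _ = 3 := by rw [hcard, Nat.card_zmod]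
end

section
/- Let F_2^8 carry a nondegenerate alternating form. If a 5-dimensional linear subspace W of F_2^8 contains a totally isotropic 4-dimensional subspace, then W contains exactly three totally isotropic 4-dimensional subspaces, and these pass through a common totally isotropic 3-dimensional subspace. -/
open Module
open scoped LinearAlgebra.Projectivization

namespace Submodule

variable {K V : Type*} [Field K] [AddCommGroup V] [Module K V] [FiniteDimensional K V]

theorem exists_eq_sup_span_singleton_of_finrank_eq_succ {L T : Submodule K V} (hLT : L ≤ T)
    (h : finrank K T = finrank K L + 1) : ∃ u ∈ T, T = L ⊔ K ∙ u := by
  obtain ⟨u, huT, huL⟩ := SetLike.exists_of_lt (lt_of_le_of_ne hLT (by rintro rfl; omega))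
  refine ⟨u, huT, (eq_of_le_of_finrank_eq (sup_le hLT ((span_singleton_le_iff_mem _ _).mpr huT))
    ?_).symm⟩
  rw [finrank_sup_span_singleton huL, h]

theorem finrank_map_mkQ_add_finrank {N T : Submodule K V} (hNT : N ≤ T) :
    finrank K (T.map N.mkQ) + finrank K N = finrank K T := by
  have := LinearMap.finrank_range_add_finrank_ker (N.mkQ ∘ₗ T.subtype)
  rwa [LinearMap.range_comp, range_subtype, LinearMap.ker_comp, ker_mkQ,
    (comapSubtypeEquivOfLe hNT).finrank_eq] at this

theorem card_finrank_eq_succ_ge (N : Submodule K V) :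
    Nat.card {T : Submodule K V // N ≤ T ∧ finrank K T = finrank K N + 1} =
      Nat.card (ℙ K (V ⧸ N)) := by
  refine Nat.card_congr (((Equiv.subtypeSubtypeEquivSubtypeInter (· ∈ Set.Ici N) _).symm.trans
    ((comapMkQRelIso N).symm.toEquiv.subtypeEquiv fun T => ?_)).trans
    (Projectivization.equivSubmodule K (V ⧸ N)).symm)
  have := finrank_map_mkQ_add_finrank T.2
  show _ ↔ finrank K (T.1.map N.mkQ) = 1
  omega

theorem card_finrank_eq_succ_between [Finite K] {L W : Submodule K V} (hLW : L ≤ W)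
    (h : finrank K W = finrank K L + 2) :
    Nat.card {T : Submodule K V // L ≤ T ∧ T ≤ W ∧ finrank K T = finrank K L + 1} =
      Nat.card K + 1 := by
  set L' := L.comap W.subtype
  have hL' : L'.map W.subtype = L := by rw [map_comap_subtype, inf_of_le_right hLW]
  have hL'r : finrank K L' = finrank K L := by rw [← hL', finrank_map_subtype_eq]
  have e : {T : Submodule K V // L ≤ T ∧ T ≤ W ∧ finrank K T = finrank K L + 1} ≃
      {T : Submodule K W // L' ≤ T ∧ finrank K T = finrank K L' + 1} := by
    refine ((Equiv.subtypeEquivRight fun T => ?_).trans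
      (Equiv.subtypeSubtypeEquivSubtypeInter (· ∈ Set.Iic W)
        fun T => L ≤ T ∧ finrank K T = finrank K L + 1).symm).trans
      ((mapIic W).symm.toEquiv.subtypeEquiv fun T => ?_)
    · exact and_left_comm
    · obtain ⟨S, rfl⟩ := (mapIic W).surjective T
      rw [OrderIso.coe_toEquiv, OrderIso.symm_apply_apply, coe_mapIic_apply, finrank_map_subtype_eq,
        ← hL', map_le_map_iff_of_injective W.injective_subtype, finrank_map_subtype_eq]
  rw [Nat.card_congr e, card_finrank_eq_succ_ge,
    Projectivization.card_of_finrank_two K _ (by rw [finrank_quotient]; omega)]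

end Submodule

namespace IsTotallyIsotropic

variable {K V : Type*} [Field K] [AddCommGroup V] [Module K V] {B : LinearMap.BilinForm K V}
  {S T W : Submodule K V}

theorem mono_s9 (hT : IsTotallyIsotropic B T) (hST : S ≤ T) : IsTotallyIsotropic B S :=
  fun x hx y hy => hT x (hST hx) y (hST hy)

theorem span_singleton {u : V} (hu : B u u = 0) : IsTotallyIsotropic B (K ∙ u) := by
  intro x hx y hy
  obtain ⟨a, rfl⟩ := Submodule.mem_span_singleton.mp hx
  obtain ⟨b, rfl⟩ := Submodule.mem_span_singleton.mp hy
  simp [hu]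

theorem sup (hB : B.IsRefl) (hS : IsTotallyIsotropic B S) (hT : IsTotallyIsotropic B T)
    (hST : ∀ x ∈ S, ∀ y ∈ T, B x y = 0) : IsTotallyIsotropic B (S ⊔ T) := by
  intro x hx y hy
  obtain ⟨s, hs, t, ht, rfl⟩ := Submodule.mem_sup.mp hx
  obtain ⟨s', hs', t', ht', rfl⟩ := Submodule.mem_sup.mp hy
  simp [hS s hs s' hs', hT t ht t' ht', hST s hs t' ht', hB _ _ (hST s' hs' t ht)]

theorem orthogonal_le_of_le [FiniteDimensional K V] (hB : B.Nondegenerate)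
    (hT : IsTotallyIsotropic B T) (hdim : finrank K V = 2 * finrank K T) (hTW : T ≤ W) :
    B.orthogonal W ≤ T := by
  have hTT : T = B.orthogonal T :=
    Submodule.eq_of_le_of_finrank_eq (fun x hx y hy => hT y hy x hx)
      (by rw [LinearMap.BilinForm.finrank_orthogonal hB]; omega)
  exact hTT ▸ LinearMap.BilinForm.orthogonal_le hTW

theorem of_orthogonal_le [FiniteDimensional K V] (hB : B.IsAlt) (hTW : T ≤ W)
    (hWT : B.orthogonal W ≤ T) (h : finrank K T = finrank K (B.orthogonal W) + 1) :
    IsTotallyIsotropic B T := by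
  obtain ⟨u, huT, rfl⟩ := Submodule.exists_eq_sup_span_singleton_of_finrank_eq_succ hWT h
  have hu : u ∈ W := hTW huT
  have hWperp : IsTotallyIsotropic B (B.orthogonal W) := fun x hx y hy =>
    hB.isRefl _ _ (hx y (hTW (hWT hy)))
  refine hWperp.sup hB.isRefl (span_singleton (hB u)) fun x hx y hy => ?_
  obtain ⟨c, rfl⟩ := Submodule.mem_span_singleton.mp hy
  simp [hB.isRefl _ _ (hx u hu)]

end IsTotallyIsotropic

/-- If a 5-dimensional linear subspace `W` of `F_2^8` (with a nondegenerate alternating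
form) contains a totally isotropic 4-dimensional subspace, then it contains exactly three
such subspaces, and these pass through a common totally isotropic 3-dimensional subspace. -/
theorem three_ti_solids_through_common_plane
    (B : (Fin 8 → ZMod 2) →ₗ[ZMod 2] (Fin 8 → ZMod 2) →ₗ[ZMod 2] ZMod 2)
    (halt : ∀ x, B x x = 0)
    (hnd : ∀ x, (∀ y, B x y = 0) → x = 0)
    (W : Submodule (ZMod 2) (Fin 8 → ZMod 2))
    (hW : Module.finrank (ZMod 2) W = 5)
    (hex : ∃ T : Submodule (ZMod 2) (Fin 8 → ZMod 2),
      T ≤ W ∧ IsTotallyIsotropic B T ∧ Module.finrank (ZMod 2) T = 4) :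
    Nat.card {T : Submodule (ZMod 2) (Fin 8 → ZMod 2) //
        T ≤ W ∧ IsTotallyIsotropic B T ∧ Module.finrank (ZMod 2) T = 4} = 3 ∧
    ∃ L : Submodule (ZMod 2) (Fin 8 → ZMod 2),
      L ≤ W ∧ IsTotallyIsotropic B L ∧ Module.finrank (ZMod 2) L = 3 ∧
      ∀ T : Submodule (ZMod 2) (Fin 8 → ZMod 2),
        T ≤ W → IsTotallyIsotropic B T → Module.finrank (ZMod 2) T = 4 → L ≤ T := by
  have hB : B.IsAlt := halt
  have hBnd : B.Nondegenerate := hB.isRefl.nondegenerate_iff_separatingLeft.mpr hnd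
  set L := LinearMap.BilinForm.orthogonal B W
  have hLr : finrank (ZMod 2) L = 3 := by
    rw [LinearMap.BilinForm.finrank_orthogonal hBnd, finrank_fin_fun, hW]
  have hL_le : ∀ T, T ≤ W → IsTotallyIsotropic B T → finrank (ZMod 2) T = 4 → L ≤ T :=
    fun T hTW hT hTr => hT.orthogonal_le_of_le hBnd (by simp [hTr]) hTW
  have hiff : ∀ T, (T ≤ W ∧ IsTotallyIsotropic B T ∧ finrank (ZMod 2) T = 4) ↔
      (L ≤ T ∧ T ≤ W ∧ finrank (ZMod 2) T = finrank (ZMod 2) L + 1) := fun T =>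
    ⟨fun ⟨hTW, hT, hTr⟩ => ⟨hL_le T hTW hT hTr, hTW, by omega⟩,
      fun ⟨hLT, hTW, hTr⟩ => ⟨hTW, .of_orthogonal_le hB hTW hLT hTr, by omega⟩⟩
  obtain ⟨T₀, hT₀W, hT₀, hT₀r⟩ := hex
  have hLT₀ := hL_le T₀ hT₀W hT₀ hT₀r
  refine ⟨?_, L, hLT₀.trans hT₀W, hT₀.mono_s9 hLT₀, hLr, hL_le⟩
  rw [Nat.card_congr (Equiv.subtypeEquivRight hiff),
    Submodule.card_finrank_eq_succ_between (hLT₀.trans hT₀W) (by omega), Nat.card_zmod]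
end

section
/- For N ≥ 3, define D_q(N) = 16·([2N choose 5]_2 − [N choose 5]_2 · ∏_{i=1}^{5}(2^{N+1-i}+1) − 15·[N choose 4]_2 · 2^{2N-8} · ∏_{i=1}^{4}(2^{N+1-i}+1)/3). Then D_q(N) = (4^{N-2} − 1) · D_l(N), where D_l(N) = [2N choose 4]_2 − [N choose 4]_2 · ∏_{i=1}^{4}(2^{N+1-i}+1) − 7·[N choose 3]_2 · 2^{2N-6} · ∏_{i=1}^{3}(2^{N+1-i}+1)/3. -/
/-!
The Gaussian binomials are exact quotients: the q-Pascal rule shows that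
`∏_{i<k} (q^(i+1) - 1)` divides `∏_{i<k} (q^(n-i) - 1)` over any commutative ring, so the natural
number division in `gaussBinom` can be replaced by division in `ℚ`. For `N = M + 4` both sides
then become rational polynomials in `2^M`, and the identity is a polynomial identity; `N = 3`
is a direct computation.
-/

/-- The Gaussian binomial coefficient `[n choose k]_q`. -/
def gaussBinom (q n k : ℕ) : ℕ :=
  (∏ i ∈ Finset.range k, (q ^ (n - i) - 1)) / ∏ i ∈ Finset.range k, (q ^ (i + 1) - 1)

/-- The number of linear `N`-qubit doilies:
`D_l(N) = [2N 4]_2 − [N 4]_2·∏_{i=1}^{4}(2^{N+1-i}+1) − 7·[N 3]_2·2^{2N-6}·∏_{i=1}^{3}(2^{N+1-i}+1)/3`. -/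
noncomputable def DlQ (N : ℕ) : ℚ :=
  (gaussBinom 2 (2 * N) 4 : ℚ)
    - (gaussBinom 2 N 4 : ℚ) * ∏ i ∈ Finset.range 4, ((2 : ℚ) ^ (N - i) + 1)
    - 7 * (gaussBinom 2 N 3 : ℚ) * (2 : ℚ) ^ (2 * N - 6) *
        (∏ i ∈ Finset.range 3, ((2 : ℚ) ^ (N - i) + 1)) / 3

/-- The number of quadratic `N`-qubit doilies:
`D_q(N) = 16·([2N 5]_2 − [N 5]_2·∏_{i=1}^{5}(2^{N+1-i}+1) − 15·[N 4]_2·2^{2N-8}·∏_{i=1}^{4}(2^{N+1-i}+1)/3)`. -/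
noncomputable def DqQ (N : ℕ) : ℚ :=
  16 * ((gaussBinom 2 (2 * N) 5 : ℚ)
    - (gaussBinom 2 N 5 : ℚ) * ∏ i ∈ Finset.range 5, ((2 : ℚ) ^ (N - i) + 1)
    - 15 * (gaussBinom 2 N 4 : ℚ) * (2 : ℚ) ^ (2 * N - 8) *
        (∏ i ∈ Finset.range 4, ((2 : ℚ) ^ (N - i) + 1)) / 3)

section QFactorial

variable {R : Type*} [CommRing R] (q : R)

/-- The q-Pascal rule `[n+1, k+1]_q = [n, k]_q + q^(k+1) [n, k+1]_q`, multiplied through by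
`∏_{i ≤ k} (q^(i+1) - 1)`. -/
theorem prod_range_pow_sub_one_pascal (n k : ℕ) :
    ∏ i ∈ Finset.range (k + 1), (q ^ (n + 1 - i) - 1)
      = (q ^ (k + 1) - 1) * ∏ i ∈ Finset.range k, (q ^ (n - i) - 1)
        + q ^ (k + 1) * ∏ i ∈ Finset.range (k + 1), (q ^ (n - i) - 1) := by
  rw [Finset.prod_range_succ' _ k, Finset.prod_range_succ _ k]
  simp only [Nat.sub_zero, Nat.add_sub_add_right]
  rcases le_or_gt k n with hkn | hnk
  · obtain ⟨m, rfl⟩ := Nat.exists_eq_add_of_le hkn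
    rw [Nat.add_sub_cancel_left, show k + m + 1 = (k + 1) + m by omega, pow_add]
    ring
  · have hzero : ∏ i ∈ Finset.range k, (q ^ (n - i) - 1) = 0 :=
      Finset.prod_eq_zero (Finset.mem_range.2 hnk) (by simp)
    simp [hzero]

theorem prod_range_pow_sub_one_dvd (n k : ℕ) :
    ∏ i ∈ Finset.range k, (q ^ (i + 1) - 1) ∣ ∏ i ∈ Finset.range k, (q ^ (n - i) - 1) := by
  induction n generalizing k with
  | zero =>
    cases k with
    | zero => simp
    | succ k => simp [Finset.prod_range_succ']
  | succ n ih =>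
    cases k with
    | zero => simp
    | succ k =>
      rw [prod_range_pow_sub_one_pascal]
      refine dvd_add ?_ (dvd_mul_of_dvd_right (ih _) _)
      rw [Finset.prod_range_succ, mul_comm]
      exact mul_dvd_mul_left _ (ih k)

end QFactorial

theorem gaussBinom_cast {q : ℕ} (hq : 1 < q) (n k : ℕ) :
    (gaussBinom q n k : ℚ) = (∏ i ∈ Finset.range k, ((q : ℚ) ^ (n - i) - 1)) /
      ∏ i ∈ Finset.range k, ((q : ℚ) ^ (i + 1) - 1) := by
  have hq0 : 0 < q := by omega
  have hcast : ∀ m, ((q ^ m - 1 : ℕ) : ℤ) = (q : ℤ) ^ m - 1 := fun m => by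
    push_cast [Nat.one_le_pow _ _ hq0]; rfl
  have hdvd : ∏ i ∈ Finset.range k, (q ^ (i + 1) - 1) ∣ ∏ i ∈ Finset.range k, (q ^ (n - i) - 1) := by
    rw [← Int.natCast_dvd_natCast]
    push_cast [hcast]
    exact prod_range_pow_sub_one_dvd _ n k
  have hne : (∏ i ∈ Finset.range k, (q ^ (i + 1) - 1) : ℕ) ≠ 0 :=
    Finset.prod_ne_zero_iff.2 fun i _ => Nat.sub_ne_zero_of_lt (Nat.one_lt_pow i.succ_ne_zero hq)
  rw [gaussBinom, Nat.cast_div hdvd (by exact_mod_cast hne)]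
  push_cast [Nat.one_le_pow _ _ hq0]
  rfl

/-- For `N ≥ 3`, `D_q(N) = (4^{N-2} − 1) · D_l(N)`. -/
theorem DqQ_eq_mul_DlQ (N : ℕ) (hN : 3 ≤ N) :
    DqQ N = ((4 : ℚ) ^ (N - 2) - 1) * DlQ N := by
  obtain rfl | ⟨M, rfl⟩ : N = 3 ∨ ∃ M, N = M + 4 :=
    (eq_or_lt_of_le hN).imp Eq.symm fun h => ⟨N - 4, by omega⟩
  · norm_num [DqQ, DlQ, gaussBinom, Finset.prod_range_succ]
  · simp only [DqQ, DlQ, gaussBinom_cast one_lt_two, Finset.prod_range_succ, Finset.prod_range_zero]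
    rw [show 2 * (M + 4) = 2 * M + 8 by ring, show (4 : ℚ) = 2 ^ 2 by norm_num, ← pow_mul]
    simp only [Nat.cast_ofNat, Nat.reduceSubDiff, Nat.sub_zero, mul_add, Nat.reduceMul, pow_add,
      pow_mul']
    ring
end

section
/- For N ≥ 2, D_l(N) = (4/15) · 4^{N-3} · Θ_2(N), where D_l(N) = [2N choose 4]_2 − [N choose 4]_2·∏_{i=1}^{4}(2^{N+1-i}+1) − 7·[N choose 3]_2·2^{2N-6}·∏_{i=1}^{3}(2^{N+1-i}+1)/3 and Θ_2(N) = (1/16)·2^{2N}·∏_{i=1}^{2} (2^{N-2+i}−1)/(2^i−1) · ∏_{i=1}^{2}(2^{N+1-i}+1). -/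
/-- `Θ_2(N) = (1/16)·2^{2N}·∏_{i=1}^{2} (2^{N-2+i}−1)/(2^i−1) · ∏_{i=1}^{2}(2^{N+1-i}+1)`,
the number of planes `PG(2,2)` of `PG(2N-1,2)` with exactly three totally isotropic lines. -/
noncomputable def Theta2 (N : ℕ) : ℚ :=
  (1 / 16) * (2 : ℚ) ^ (2 * N) *
    (∏ i ∈ Finset.range 2, (((2 : ℚ) ^ (N - 1 + i) - 1) / ((2 : ℚ) ^ (i + 1) - 1))) *
    ∏ i ∈ Finset.range 2, ((2 : ℚ) ^ (N - i) + 1)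

open Finset

theorem pow_add_sub_one_eq (q k m : ℕ) :
    q ^ (k + m) - 1 = (q ^ k - 1) + q ^ k * (q ^ m - 1) := by
  rcases q.eq_zero_or_pos with rfl | hq
  · rcases k.eq_zero_or_pos with rfl | hk <;> simp [*]
  have hk := Nat.one_le_pow k q hq
  have hm := Nat.one_le_pow m q hq
  have hle : q ^ k ≤ q ^ k * q ^ m := Nat.le_mul_of_pos_right _ hm
  rw [Nat.mul_sub, mul_one, pow_add]
  omega

theorem prod_pow_succ_sub_one_dvd (q n k : ℕ) :
    ∏ i ∈ range k, (q ^ (i + 1) - 1) ∣ ∏ i ∈ range k, (q ^ (n - i) - 1) := by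
  induction n generalizing k with
  | zero =>
    cases k with
    | zero => simp
    | succ k => simp [prod_range_succ']
  | succ n ih =>
    cases k with
    | zero => simp
    | succ k =>
      obtain hnk | ⟨m, rfl⟩ : n < k ∨ ∃ m, n = k + m :=
        (lt_or_ge n k).imp id Nat.exists_eq_add_of_le
      · rw [prod_eq_zero (f := fun i => q ^ (n + 1 - i) - 1) (mem_range.2 (by omega : n + 1 < k + 1))
          (by simp)]
        exact dvd_zero _
      have hsplit : ∏ i ∈ range (k + 1), (q ^ (k + m + 1 - i) - 1)
          = (∏ i ∈ range k, (q ^ (k + m - i) - 1)) * (q ^ (k + 1) - 1)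
            + q ^ (k + 1) * ∏ i ∈ range (k + 1), (q ^ (k + m - i) - 1) := by
        rw [prod_range_succ', prod_range_succ, Nat.add_sub_cancel_left,
          show k + m + 1 - 0 = (k + 1) + m by omega, pow_add_sub_one_eq]
        simp only [Nat.add_sub_add_right]
        ring
      rw [hsplit]
      refine dvd_add ?_ (dvd_mul_of_dvd_right (ih (k + 1)) _)
      rw [prod_range_succ]
      exact mul_dvd_mul (ih k) dvd_rfl

theorem cast_gaussBinom {K : Type*} [Field K] [CharZero K] {q : ℕ} (hq : 0 < q) (n k : ℕ) :
    (gaussBinom q n k : K)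
      = (∏ i ∈ range k, ((q : K) ^ (n - i) - 1)) / ∏ i ∈ range k, ((q : K) ^ (i + 1) - 1) := by
  rw [gaussBinom, Nat.cast_div_charZero (prod_pow_succ_sub_one_dvd q n k)]
  simp [Nat.cast_prod, Nat.cast_sub (Nat.one_le_pow _ _ hq)]

theorem DlQ_add_three (M : ℕ) : DlQ (M + 3) = (4 / 15) * (4 : ℚ) ^ M * Theta2 (M + 3) := by
  rw [DlQ, Theta2, cast_gaussBinom two_pos, cast_gaussBinom two_pos, cast_gaussBinom two_pos]
  simp only [prod_range_succ, prod_range_zero, one_mul]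
  rw [show 2 * (M + 3) = M + M + 6 by ring, show M + 3 - 2 = M + 1 by omega,
    show M + M + 6 - 2 = M + M + 4 by omega, show M + M + 6 - 3 = M + M + 3 by omega,
    show (4 : ℚ) = 2 * 2 by norm_num, mul_pow]
  norm_num [pow_add]
  field_simp
  ring

theorem DlQ_eq_theta2_general (N : ℕ) :
    DlQ N = (4 / 15) * (4 : ℚ) ^ ((N : ℤ) - 3) * Theta2 N := by
  obtain hN | ⟨M, rfl⟩ : N < 3 ∨ ∃ M, N = M + 3 :=
    (lt_or_ge N 3).imp id fun h => ⟨N - 3, by omega⟩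
  -- the exponents `N - i` and `2 * N - 6` truncate here, so these cases are evaluated directly
  · interval_cases N <;> norm_num [DlQ, Theta2, gaussBinom, prod_range_succ]
  · rw [DlQ_add_three, Nat.cast_add, Nat.cast_ofNat, add_sub_cancel_right, zpow_natCast]

/-- For `N ≥ 2`, `D_l(N) = (4/15) · 4^{N-3} · Θ_2(N)`. -/
theorem DlQ_eq_theta2 (N : ℕ) (hN : 2 ≤ N) :
    DlQ N = (4 / 15) * (4 : ℚ) ^ ((N : ℤ) - 3) * Theta2 N :=
  DlQ_eq_theta2_general N
end
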